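/- Let M be an n×n exceptional extremal copositive matrix having exactly n representative minimal zeros w₁,…,w_n that span ℝⁿ, and let W = [w₁ ⋯ w_n]. Then every completely positive matrix A with ⟨A, M⟩ = 0 has the form A = WCW^T for some n×n completely positive C with cp-rank(A) = cp-rank(C), and the CP factorizations B ↦ W^{-1}B give a bijection between CP factorizations of A and of C. -/

import Mathlib

open Matrix

/-- A CP representation of `A`: a multiset of nonnegative, nonzero, pairwise linearly
independent vectors whose rank-one outer products sum to `A`. Counted as a multiset,
i.e. up to reordering of the summands (columns). -/
def IsCPRep {n : ℕ} (A : Matrix (Fin n) (Fin n) ℝ) (L : Multiset (Fin n → ℝ)) : Prop :=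
  (∀ b ∈ L, ∀ i, 0 ≤ b i) ∧ (∀ b ∈ L, b ≠ 0) ∧
  L.Pairwise (fun b c => LinearIndependent ℝ ![b, c]) ∧
  (L.map fun b => vecMulVec b b).sum = A

/-- `A` is completely positive. -/
def IsCP {n : ℕ} (A : Matrix (Fin n) (Fin n) ℝ) : Prop := ∃ L, IsCPRep A L

/-- The cp-rank: minimal number of rank-one summands in a CP representation. -/
noncomputable def cpRank {n : ℕ} (A : Matrix (Fin n) (Fin n) ℝ) : ℕ :=
  sInf {k | ∃ L, IsCPRep A L ∧ Multiset.card L = k}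

/-- A minimal CP representation: a CP representation with `cpRank A` summands. -/
def IsMinCPRep {n : ℕ} (A : Matrix (Fin n) (Fin n) ℝ) (L : Multiset (Fin n → ℝ)) : Prop :=
  IsCPRep A L ∧ Multiset.card L = cpRank A

/-- The graph of a symmetric matrix: `i ~ j` iff `i ≠ j` and `A i j ≠ 0`. -/
def matGraph {n : ℕ} (A : Matrix (Fin n) (Fin n) ℝ) : SimpleGraph (Fin n) where
  Adj i j := i ≠ j ∧ (A i j ≠ 0 ∨ A j i ≠ 0)
  symm := ⟨fun _ _ h => ⟨h.1.symm, h.2.symm⟩⟩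
  loopless := ⟨fun _ h => h.1 rfl⟩

/-- The comparison matrix `M(A)`. -/
noncomputable def compMatrix {n : ℕ} (A : Matrix (Fin n) (Fin n) ℝ) : Matrix (Fin n) (Fin n) ℝ :=
  fun i j => if i = j then |A i j| else -|A i j|

/-! Every factor `b` of a CP factorization `A = ∑ b bᵀ` satisfies `bᵀ M b ≥ 0` by copositivity,
and these numbers sum to `⟨A, M⟩ = 0`, so each factor is a zero of `M`. Hence `W⁻¹ b ≥ 0`,
while `W`, whose columns are the nonnegative `wⱼ`, maps nonnegative vectors to nonnegative
vectors. So `b ↦ W⁻¹ b` and `c ↦ W c` are mutually inverse maps between the factors of `A`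
and those of `C = W⁻¹ A W⁻ᵀ`, and they preserve the number of factors. -/

theorem Multiset.Pairwise.map {α β : Type*} {r : α → α → Prop} {s : β → β → Prop}
    (f : α → β) (hrs : ∀ a b, r a b → s (f a) (f b)) {m : Multiset α} (h : m.Pairwise r) :
    (m.map f).Pairwise s := by
  obtain ⟨l, rfl, hl⟩ := h
  exact ⟨l.map f, rfl, hl.map f hrs⟩

namespace Matrix

variable {m R : Type*} [Fintype m]

theorem trace_vecMulVec_self_mul [CommSemiring R] (b : m → R) (M : Matrix m m R) :
    trace (vecMulVec b b * M) = b ⬝ᵥ (M *ᵥ b) := by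
  rw [vecMulVec_mul, trace_vecMulVec, dotProduct_comm, dotProduct_mulVec]

theorem vecMulVec_mulVec_self [CommSemiring R] (P : Matrix m m R) (b : m → R) :
    vecMulVec (P *ᵥ b) (P *ᵥ b) = P * vecMulVec b b * Pᵀ := by
  rw [mul_vecMulVec, vecMulVec_mul, vecMul_transpose]

theorem mulVec_nonneg [Semiring R] [PartialOrder R] [IsOrderedRing R] {P : Matrix m m R}
    (hP : ∀ i j, 0 ≤ P i j) {c : m → R} (hc : 0 ≤ c) : 0 ≤ P *ᵥ c :=
  fun i => Finset.sum_nonneg fun j _ => mul_nonneg (hP i j) (hc j)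

variable [DecidableEq m] [CommRing R]

theorem linearIndependent_pair_mulVec {P : Matrix m m R} (hP : IsUnit P) {b c : m → R}
    (h : LinearIndependent R ![b, c]) : LinearIndependent R ![P *ᵥ b, P *ᵥ c] := by
  have hcomp : ⇑P.mulVecLin ∘ ![b, c] = ![P *ᵥ b, P *ᵥ c] := by
    ext i : 1
    fin_cases i <;> rfl
  simpa only [hcomp] using
    h.map' P.mulVecLin (LinearMap.ker_eq_bot.2 (mulVec_injective_of_isUnit hP))

theorem mul_mul_inv_mul_transpose {P : Matrix m m R} (hP : IsUnit P) (A : Matrix m m R) :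
    P * (P⁻¹ * A * P⁻¹ᵀ) * Pᵀ = A := by
  have hdet : IsUnit P.det := (isUnit_iff_isUnit_det P).1 hP
  have hdetT : IsUnit Pᵀ.det := by rwa [det_transpose]
  rw [transpose_nonsing_inv, mul_assoc P⁻¹, mul_nonsing_inv_cancel_left _ _ hdet]
  exact nonsing_inv_mul_cancel_right _ _ hdetT

end Matrix

section CPFactorization

variable {n : ℕ} {A P : Matrix (Fin n) (Fin n) ℝ} {L : Multiset (Fin n → ℝ)}

namespace IsCPRep

theorem trace_mul (hL : IsCPRep A L) (M : Matrix (Fin n) (Fin n) ℝ) :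
    trace (A * M) = (L.map fun b => b ⬝ᵥ (M *ᵥ b)).sum := by
  rw [← hL.2.2.2, ← Multiset.sum_map_mul_right, trace_multiset_sum, Multiset.map_map]
  exact congrArg _ (Multiset.map_congr rfl fun b _ => trace_vecMulVec_self_mul b M)

theorem dotProduct_mulVec_eq_zero {M : Matrix (Fin n) (Fin n) ℝ} (hL : IsCPRep A L)
    (hcop : ∀ x : Fin n → ℝ, (∀ i, 0 ≤ x i) → 0 ≤ x ⬝ᵥ (M *ᵥ x))
    (horth : trace (A * M) = 0) {b : Fin n → ℝ} (hb : b ∈ L) : b ⬝ᵥ (M *ᵥ b) = 0 := by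
  have hnonneg : ∀ x ∈ L.map fun b => b ⬝ᵥ (M *ᵥ b), 0 ≤ x := by
    simp only [Multiset.mem_map]
    rintro _ ⟨a, ha, rfl⟩
    exact hcop a (hL.1 a ha)
  have hle := Multiset.single_le_sum hnonneg _ (Multiset.mem_map_of_mem _ hb)
  rw [← hL.trace_mul, horth] at hle
  exact le_antisymm hle (hcop b (hL.1 b hb))

theorem map_mulVec (hP : IsUnit P) (hL : IsCPRep A L) (hnonneg : ∀ b ∈ L, 0 ≤ P *ᵥ b) :
    IsCPRep (P * A * Pᵀ) (L.map (P *ᵥ ·)) := by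
  obtain ⟨-, hne, hpair, hsum⟩ := hL
  refine ⟨?_, ?_, hpair.map _ fun _ _ => linearIndependent_pair_mulVec hP, ?_⟩
  · simp only [Multiset.mem_map]
    rintro _ ⟨b, hb, rfl⟩
    exact hnonneg b hb
  · simp only [Multiset.mem_map]
    rintro _ ⟨b, hb, rfl⟩
    exact (mulVec_injective_of_isUnit hP).ne_iff' (mulVec_zero P) |>.2 (hne b hb)
  · simp only [← hsum, Multiset.map_map, Function.comp_def, vecMulVec_mulVec_self,
      Multiset.sum_map_mul_left, Multiset.sum_map_mul_right]

end IsCPRep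

theorem cpRank_eq_of_mapsTo_of_surjOn {C : Matrix (Fin n) (Fin n) ℝ}
    {f : (Fin n → ℝ) → Fin n → ℝ}
    (hmaps : Set.MapsTo (Multiset.map f) {L | IsCPRep A L} {L | IsCPRep C L})
    (hsurj : Set.SurjOn (Multiset.map f) {L | IsCPRep A L} {L | IsCPRep C L}) :
    cpRank A = cpRank C := by
  unfold cpRank
  congr 1
  ext k
  constructor
  · rintro ⟨L, hL, rfl⟩
    exact ⟨L.map f, hmaps hL, Multiset.card_map f L⟩
  · rintro ⟨_, hL', rfl⟩
    obtain ⟨L, hL, rfl⟩ := hsurj hL'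
    exact ⟨L, hL, (Multiset.card_map f L).symm⟩

theorem bijOn_map_inv_mulVec (hP : IsUnit P) (hPnonneg : ∀ i j, 0 ≤ P i j)
    (hinv : ∀ L, IsCPRep A L → ∀ b ∈ L, 0 ≤ P⁻¹ *ᵥ b) :
    Set.BijOn (fun L : Multiset (Fin n → ℝ) => L.map (P⁻¹ *ᵥ ·))
      {L | IsCPRep A L} {L | IsCPRep (P⁻¹ * A * P⁻¹ᵀ) L} := by
  have hPinv : IsUnit P⁻¹ := isUnit_nonsing_inv_iff.2 hP
  refine ⟨fun L hL => hL.map_mulVec hPinv (hinv L hL),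
    (Multiset.map_injective (mulVec_injective_of_isUnit hPinv)).injOn, fun L' hL' => ?_⟩
  refine ⟨L'.map (P *ᵥ ·), ?_, ?_⟩
  · have h := hL'.map_mulVec hP fun b hb => mulVec_nonneg hPnonneg (hL'.1 b hb)
    rwa [mul_mul_inv_mul_transpose hP] at h
  · simp only [Multiset.map_map, Function.comp_def, mulVec_mulVec,
      nonsing_inv_mul _ ((isUnit_iff_isUnit_det P).1 hP), one_mulVec, Multiset.map_id']

end CPFactorization

/-- Factorizations through the zeros of a copositive matrix: if `M` is copositive with
zeros `w₁, …, w_n` (columns of the nonsingular `W`) such that every zero of `M` is a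
nonnegative combination of the `wⱼ`, then every completely positive `A` orthogonal to `M`
is `A = WCWᵀ` with `C` completely positive, `cpRank A = cpRank C`, and `b ↦ W⁻¹b` gives a
bijection between CP factorizations of `A` and of `C`. -/
theorem stmt_17 (n : ℕ) (M A W : Matrix (Fin n) (Fin n) ℝ) (w : Fin n → (Fin n → ℝ))
    (hW : W = Matrix.of fun i j => w j i) (hWns : W.det ≠ 0)
    (hcop : ∀ x : Fin n → ℝ, (∀ i, 0 ≤ x i) → 0 ≤ x ⬝ᵥ (M *ᵥ x))
    (hzeros : ∀ j, (∀ i, 0 ≤ w j i) ∧ w j ≠ 0 ∧ (w j) ⬝ᵥ (M *ᵥ (w j)) = 0)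
    (hcomb : ∀ b : Fin n → ℝ, (∀ i, 0 ≤ b i) → b ⬝ᵥ (M *ᵥ b) = 0 →
      ∃ c : Fin n → ℝ, (∀ i, 0 ≤ c i) ∧ b = W *ᵥ c)
    (hCP : IsCP A) (horth : Matrix.trace (A * M) = 0) :
    ∃ C : Matrix (Fin n) (Fin n) ℝ, IsCP C ∧ A = W * C * Wᵀ ∧ cpRank A = cpRank C ∧
      Set.BijOn (fun L : Multiset (Fin n → ℝ) => L.map (fun b => W⁻¹ *ᵥ b))
        {L | IsCPRep A L} {L | IsCPRep C L} := by
  have hWunit : IsUnit W := (isUnit_iff_isUnit_det W).2 hWns.isUnit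
  have hWnonneg : ∀ i j, 0 ≤ W i j := fun i j => by
    rw [hW]
    exact (hzeros j).1 i
  have hinv : ∀ L, IsCPRep A L → ∀ b ∈ L, 0 ≤ W⁻¹ *ᵥ b := by
    intro L hL b hb
    obtain ⟨c, hc, rfl⟩ := hcomb b (hL.1 b hb) (hL.dotProduct_mulVec_eq_zero hcop horth hb)
    rwa [mulVec_mulVec, nonsing_inv_mul _ hWns.isUnit, one_mulVec]
  have hbij := bijOn_map_inv_mulVec hWunit hWnonneg hinv
  obtain ⟨L, hL⟩ := hCP
  exact ⟨_, ⟨_, hbij.mapsTo hL⟩, (mul_mul_inv_mul_transpose hWunit A).symm,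
    cpRank_eq_of_mapsTo_of_surjOn hbij.mapsTo hbij.surjOn, hbij⟩
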